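/- arXiv:2006.13701 — 2 statements merged into one kernel-verified Lean document; each statement's English description precedes it below -/
import Mathlib

section
/- Let K be an n×n real symmetric positive definite matrix, let 1 ≤ k ≤ n, and let u, w ∈ ℝⁿ. Then ∑_{C ⊆ {1,…,n}, |C| = k} (det(K_{CC})/e_k(K)) · uᵀ C K_{CC}^{-1} Cᵀ w = (e_k(K) − e_k(K − w uᵀ)) / e_k(K), where w uᵀ denotes the rank-one n×n matrix with entries w_i u_j. -/
open Matrix BigOperators Finset

/-- The `n × |C|` sampling matrix obtained by selecting the columns of the identity
matrix indexed by `C`. -/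
def sampMatrix {n : ℕ} (C : Finset (Fin n)) : Matrix (Fin n) {x // x ∈ C} ℝ :=
  fun i j => if i = (j : Fin n) then 1 else 0

/-- The principal submatrix `A_{CC}` of `A` with rows and columns indexed by `C`. -/
def principalSub {n : ℕ} (A : Matrix (Fin n) (Fin n) ℝ) (C : Finset (Fin n)) :
    Matrix {x // x ∈ C} {x // x ∈ C} ℝ :=
  fun i j => A i j

/-- `e_k(A)`: the sum of all `k × k` principal minors of `A` (with `e_0(A) = 1`). -/
noncomputable def esymmMinors {n : ℕ} (A : Matrix (Fin n) (Fin n) ℝ) (k : ℕ) : ℝ :=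
  ∑ C ∈ Finset.univ.powersetCard k, (principalSub A C).det

/-!
Summand by summand: by the matrix determinant lemma,
`det (K - w uᵀ)_{CC} = det K_{CC} · (1 - u_Cᵀ K_{CC}⁻¹ w_C)`, and `uᵀ C K_{CC}⁻¹ Cᵀ w` is exactly
`u_Cᵀ K_{CC}⁻¹ w_C`. Hence `det K_{CC} · uᵀ C K_{CC}⁻¹ Cᵀ w = det K_{CC} - det (K - w uᵀ)_{CC}`,
and summing over `|C| = k` gives `e_k(K) - e_k(K - w uᵀ)`.
-/

theorem Matrix.det_sub_vecMulVec {m α : Type*} [Fintype m] [DecidableEq m] [CommRing α]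
    {A : Matrix m m α} (hA : IsUnit A.det) (w u : m → α) :
    (A - vecMulVec w u).det = A.det * (1 - u ⬝ᵥ A⁻¹ *ᵥ w) := by
  have hsplit :
      A - vecMulVec w u = A * (1 + replicateCol Unit (-(A⁻¹ *ᵥ w)) * replicateRow Unit u) := by
    rw [Matrix.mul_add, Matrix.mul_one, ← vecMulVec_eq, mul_vecMulVec, mulVec_neg, mulVec_mulVec,
      mul_nonsing_inv A hA, one_mulVec, neg_vecMulVec, sub_eq_add_neg]
  rw [hsplit, det_mul, det_one_add_replicateCol_mul_replicateRow, dotProduct_neg, sub_eq_add_neg]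

theorem principalSub_eq_submatrix {n : ℕ} (A : Matrix (Fin n) (Fin n) ℝ) (C : Finset (Fin n)) :
    principalSub A C = A.submatrix Subtype.val Subtype.val :=
  rfl

theorem principalSub_sub_vecMulVec {n : ℕ} (A : Matrix (Fin n) (Fin n) ℝ) (C : Finset (Fin n))
    (w u : Fin n → ℝ) :
    principalSub (A - vecMulVec w u) C =
      principalSub A C - vecMulVec (fun j : C => w j) (fun j : C => u j) :=
  rfl

theorem sampMatrix_transpose_mulVec {n : ℕ} (C : Finset (Fin n)) (w : Fin n → ℝ) :
    (sampMatrix C)ᵀ *ᵥ w = fun j : C => w j := by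
  funext j
  simp [mulVec, sampMatrix, dotProduct]

theorem vecMul_sampMatrix {n : ℕ} (C : Finset (Fin n)) (u : Fin n → ℝ) :
    u ᵥ* sampMatrix C = fun j : C => u j := by
  funext j
  simp [vecMul, sampMatrix, dotProduct]

theorem dotProduct_sampMatrix_mul_mul_transpose_mulVec {n : ℕ} (C : Finset (Fin n))
    (B : Matrix C C ℝ) (u w : Fin n → ℝ) :
    u ⬝ᵥ (sampMatrix C * B * (sampMatrix C)ᵀ) *ᵥ w =
      (fun j : C => u j) ⬝ᵥ B *ᵥ (fun j : C => w j) := by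
  rw [← mulVec_mulVec, ← mulVec_mulVec, dotProduct_mulVec, sampMatrix_transpose_mulVec,
    vecMul_sampMatrix]

theorem det_principalSub_sub_vecMulVec {n : ℕ} {A : Matrix (Fin n) (Fin n) ℝ}
    {C : Finset (Fin n)} (hA : IsUnit (principalSub A C).det) (u w : Fin n → ℝ) :
    (principalSub (A - vecMulVec w u) C).det =
      (principalSub A C).det -
        (principalSub A C).det *
          (u ⬝ᵥ (sampMatrix C * (principalSub A C)⁻¹ * (sampMatrix C)ᵀ) *ᵥ w) := by
  rw [principalSub_sub_vecMulVec, det_sub_vecMulVec hA,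
    dotProduct_sampMatrix_mul_mul_transpose_mulVec, mul_sub, mul_one]

theorem kdpp_expectation_bilinear_general (n : ℕ) (K : Matrix (Fin n) (Fin n) ℝ)
    (hPD : K.PosDef) (k : ℕ)
    (u w : Fin n → ℝ) :
    ∑ C ∈ Finset.univ.powersetCard k,
        ((principalSub K C).det / esymmMinors K k) *
          (u ⬝ᵥ (sampMatrix C * (principalSub K C)⁻¹ * (sampMatrix C)ᵀ).mulVec w) =
      (esymmMinors K k - esymmMinors (K - vecMulVec w u) k) / esymmMinors K k := by
  have hunit (C : Finset (Fin n)) : IsUnit (principalSub K C).det := by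
    rw [principalSub_eq_submatrix]
    exact (hPD.submatrix Subtype.val_injective).det_pos.ne'.isUnit
  simp_rw [div_mul_eq_mul_div, ← sum_div, esymmMinors, ← sum_sub_distrib,
    det_principalSub_sub_vecMulVec (hunit _), sub_sub_cancel]

/-- Expectation over `C ~ kDPP(K)` of the bilinear form `uᵀ C K_{CC}⁻¹ Cᵀ w` equals
`(e_k(K) − e_k(K − w uᵀ)) / e_k(K)`. -/
theorem kdpp_expectation_bilinear (n : ℕ) (K : Matrix (Fin n) (Fin n) ℝ)
    (hsymm : K.IsSymm) (hPD : K.PosDef) (k : ℕ) (hk1 : 1 ≤ k) (hkn : k ≤ n)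
    (u w : Fin n → ℝ) :
    ∑ C ∈ Finset.univ.powersetCard k,
        ((principalSub K C).det / esymmMinors K k) *
          (u ⬝ᵥ (sampMatrix C * (principalSub K C)⁻¹ * (sampMatrix C)ᵀ).mulVec w) =
      (esymmMinors K k - esymmMinors (K - vecMulVec w u) k) / esymmMinors K k :=
  kdpp_expectation_bilinear_general n K hPD k u w
end

section
/- Let K be an n×n real matrix, 1 ≤ k ≤ n, and u, w ∈ ℝⁿ. Then e_k(K) − e_k(K − w uᵀ) = ((−1)^{k+1}/(n−k)!) · (d/dt)^{n−k} [uᵀ adj(tI − K) w] evaluated at t = 0, where the entries of adj(tI − K) are polynomials in t and the derivative is the (n−k)-th polynomial derivative. -/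
open Matrix BigOperators Finset Polynomial

/-!
The coefficient of `t ^ (n - k)` in `det (t I - A)` is `(-1) ^ k e_k(A)`. Since
`t I - (K - w uᵀ) = (t I - K) + w uᵀ`, the matrix determinant lemma in its adjugate form
`det (M + w uᵀ) = det M + uᵀ adj(M) w` shows that the characteristic polynomials of `K - w uᵀ`
and `K` differ by `uᵀ adj(t I - K) w`. Comparing coefficients of `t ^ (n - k)`, and reading a
coefficient off as an iterated derivative at `0`, gives the formula.
-/

namespace Matrix

variable {ι R : Type*} [Fintype ι] [DecidableEq ι] [CommRing R]

theorem det_add_vecMulVec_of_isUnit {A : Matrix ι ι R} (hA : IsUnit A.det) (w u : ι → R) :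
    (A + vecMulVec w u).det = A.det + u ⬝ᵥ A.adjugate *ᵥ w := by
  rw [vecMulVec_eq Unit, det_add_replicateCol_mul_replicateRow hA, det_unique (1 + _), add_apply,
    one_apply_eq, mul_add, mul_one, inv_def, Matrix.mul_smul, Matrix.smul_mul, smul_apply,
    smul_eq_mul, Ring.mul_inverse_cancel_left _ _ hA, Matrix.mul_assoc]
  simp [mul_apply, dotProduct, mulVec]

theorem det_add_vecMulVec_of_det_ne_zero [IsDomain R] {A : Matrix ι ι R} (hA : A.det ≠ 0)
    (w u : ι → R) :
    (A + vecMulVec w u).det = A.det + u ⬝ᵥ A.adjugate *ᵥ w := by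
  let f := algebraMap R (FractionRing R)
  have hf : Function.Injective f := IsFractionRing.injective R (FractionRing R)
  have hA' : IsUnit (f.mapMatrix A).det := by
    rw [← RingHom.map_det]
    exact ((map_ne_zero_iff f hf).mpr hA).isUnit
  apply hf
  calc f (A + vecMulVec w u).det = (f.mapMatrix A + vecMulVec (f ∘ w) (f ∘ u)).det := by
        rw [RingHom.map_det]; congr 1; ext; simp [vecMulVec_apply]
    _ = (f.mapMatrix A).det + (f ∘ u) ⬝ᵥ (f.mapMatrix A).adjugate *ᵥ (f ∘ w) :=
        det_add_vecMulVec_of_isUnit hA' _ _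
    _ = f (A.det + u ⬝ᵥ A.adjugate *ᵥ w) := by
        rw [map_add, RingHom.map_det, RingHom.map_dotProduct, ← RingHom.map_adjugate]
        congr 2
        ext i
        exact (RingHom.map_mulVec f _ _ i).symm

theorem charmatrix_sub_vecMulVec (M : Matrix ι ι R) (w u : ι → R) :
    charmatrix (M - vecMulVec w u) = charmatrix M + vecMulVec (C ∘ w) (C ∘ u) := by
  ext i j : 1
  simp only [charmatrix_apply, sub_apply, vecMulVec_apply, map_sub, map_mul, add_apply,
    Function.comp_apply]
  ring

theorem charpoly_sub_vecMulVec [IsDomain R] (M : Matrix ι ι R) (w u : ι → R) :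
    (M - vecMulVec w u).charpoly =
      M.charpoly + (C ∘ u) ⬝ᵥ (charmatrix M).adjugate *ᵥ (C ∘ w) := by
  rw [charpoly, charmatrix_sub_vecMulVec,
    det_add_vecMulVec_of_det_ne_zero M.charpoly_monic.ne_zero]
  rfl

end Matrix

theorem Polynomial.eval_zero_iterate_derivative {R : Type*} [Semiring R] (p : R[X]) (m : ℕ) :
    (derivative^[m] p).eval 0 = m.factorial • p.coeff m := by
  rw [← coeff_zero_eq_eval_zero, coeff_iterate_derivative, zero_add, Nat.descFactorial_self]

theorem charpoly_coeff_eq_esymmMinors {n k : ℕ} (A : Matrix (Fin n) (Fin n) ℝ) (hkn : k ≤ n) :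
    A.charpoly.coeff (n - k) = (-1) ^ k * esymmMinors A k := by
  have h := A.charpoly_coeff_eq_sum_minors k (by rwa [Fintype.card_fin])
  rwa [Fintype.card_fin] at h

theorem esymm_sub_rank_one_eq_deriv_adjugate_general (n : ℕ) (K : Matrix (Fin n) (Fin n) ℝ)
    (k : ℕ) (hkn : k ≤ n) (u w : Fin n → ℝ) :
    esymmMinors K k - esymmMinors (K - vecMulVec w u) k =
      ((-1 : ℝ) ^ (k + 1) / (n - k).factorial) *
        (Polynomial.derivative^[n - k]
          (∑ i, ∑ j, Polynomial.C (u i) * (Matrix.charmatrix K).adjugate i j *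
            Polynomial.C (w j))).eval 0 := by
  set p := ∑ i, ∑ j, C (u i) * (charmatrix K).adjugate i j * C (w j)
  have hp : p = (C ∘ u) ⬝ᵥ (charmatrix K).adjugate *ᵥ (C ∘ w) := by
    simp [p, dotProduct, mulVec, mul_sum, mul_assoc]
  have hcoeff := congrArg (coeff · (n - k)) (K.charpoly_sub_vecMulVec w u)
  simp only [coeff_add, ← hp, charpoly_coeff_eq_esymmMinors _ hkn] at hcoeff
  have hsign : ((-1 : ℝ) ^ k) ^ 2 = 1 := by rw [← pow_mul, mul_comm, pow_mul, neg_one_sq, one_pow]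
  have hfac : ((n - k).factorial : ℝ) ≠ 0 := by positivity
  rw [eval_zero_iterate_derivative, nsmul_eq_mul, ← mul_assoc, div_mul_cancel₀ _ hfac]
  linear_combination (-(-1 : ℝ) ^ k) * hcoeff -
    (esymmMinors K k - esymmMinors (K - vecMulVec w u) k) * hsign

/-- `e_k(K) − e_k(K − w uᵀ)` equals `((−1)^{k+1}/(n−k)!)` times the `(n−k)`-th
derivative of the polynomial `t ↦ uᵀ adj(tI − K) w` evaluated at `t = 0`.
Here `charmatrix K = t·I − K` as a matrix of polynomials in `t`. -/
theorem esymm_sub_rank_one_eq_deriv_adjugate (n : ℕ) (K : Matrix (Fin n) (Fin n) ℝ)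
    (k : ℕ) (hk1 : 1 ≤ k) (hkn : k ≤ n) (u w : Fin n → ℝ) :
    esymmMinors K k - esymmMinors (K - vecMulVec w u) k =
      ((-1 : ℝ) ^ (k + 1) / (n - k).factorial) *
        (Polynomial.derivative^[n - k]
          (∑ i, ∑ j, Polynomial.C (u i) * (Matrix.charmatrix K).adjugate i j *
            Polynomial.C (w j))).eval 0 :=
  esymm_sub_rank_one_eq_deriv_adjugate_general n K k hkn u w
end
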